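/- Let β ∈ (0,1] be real and let η ∈ ℂ with |η| ≤ 1. Then the set { (1 − β·|w|²) / (1 − β·η·|w|²) : w ∈ ℂ, |w| < 1 } ⊆ ℂ is convex if and only if η is real and −1 ≤ η ≤ 1. -/

import Mathlib

/-- Convexity of the Berezin range of the composition operator `C_φ`, `φ(w) = η·w`,
on the weighted Hardy space `H²(β)` with weight `β_n² = (1/β)^n`. -/
theorem stmt13 (β : ℝ) (hβ0 : 0 < β) (hβ1 : β ≤ 1) (η : ℂ) (hη : ‖η‖ ≤ 1) :
    Convex ℝ {z : ℂ | ∃ w : ℂ, ‖w‖ < 1 ∧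
        z = ((1 - β * ‖w‖ ^ 2 : ℝ) : ℂ) / (1 - (β : ℂ) * η * ((‖w‖ ^ 2 : ℝ) : ℂ))}
      ↔ (η.im = 0 ∧ -1 ≤ η.re ∧ η.re ≤ 1) := by
  have habs : |η.re| ≤ 1 := (Complex.abs_re_le_norm η).trans hη
  have hdgen : ∀ t : ℝ, 0 ≤ t → t < 1 → (1 - (β : ℂ) * η * ((t : ℝ) : ℂ)) ≠ 0 := by
    intro t ht0 ht1 h
    have habst : ‖(β : ℂ) * η * ((t : ℝ) : ℂ)‖ < 1 := by
      have heq : ‖(β : ℂ) * η * ((t : ℝ) : ℂ)‖ = β * ‖η‖ * t := by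
        simp [map_mul, Complex.norm_real, abs_of_nonneg hβ0.le, abs_of_nonneg ht0]
      rw [heq]
      have h1 : ‖η‖ ≤ 1 := hη
      have h2' : β * ‖η‖ ≤ 1 := by nlinarith [norm_nonneg η]
      calc β * ‖η‖ * t ≤ 1 * t := mul_le_mul_of_nonneg_right h2' ht0
        _ = t := one_mul t
        _ < 1 := ht1
    have h1 : (β : ℂ) * η * ((t : ℝ) : ℂ) = 1 := by linear_combination -h
    rw [h1] at habst; simp at habst
  constructor
  · intro hconv
    refine ⟨?_, (abs_le.1 habs).1, (abs_le.1 habs).2⟩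
    by_contra hb0
    set a : ℝ := η.re with ha
    set b : ℝ := η.im with hb
    set c : ℂ := ⟨1/2, (a - 1)/(2*b)⟩ with hc
    have hcre : c.re = 1/2 := rfl
    have hcim : c.im = (a - 1)/(2*b) := rfl
    -- every element of the set lies on the circle centered at c of radius |c|
    have circ : ∀ z ∈ {z : ℂ | ∃ w : ℂ, ‖w‖ < 1 ∧
        z = ((1 - β * ‖w‖ ^ 2 : ℝ) : ℂ) / (1 - (β : ℂ) * η * ((‖w‖ ^ 2 : ℝ) : ℂ))},
        Complex.normSq (z - c) = Complex.normSq c := by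
      rintro z ⟨w, hw, rfl⟩
      set t : ℝ := ‖w‖ ^ 2 with hts
      have ht0 : 0 ≤ t := by positivity
      have ht1 : t < 1 := by
        have := pow_lt_one₀ (norm_nonneg w) hw (two_ne_zero)
        simpa [hts] using this
      have hd := hdgen t ht0 ht1
      set d : ℂ := 1 - (β : ℂ) * η * ((t : ℝ) : ℂ) with hdd
      have hz : ((1 - β * t : ℝ) : ℂ) / d - c = (((1 - β * t : ℝ) : ℂ) - c * d) / d := by
        field_simp
      rw [hz, Complex.normSq_div, div_eq_iff (by simpa using hd : Complex.normSq d ≠ 0)]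
      have hdre : d.re = 1 - β * t * a := by
        simp [hdd, ha, Complex.mul_re, Complex.mul_im]; ring
      have hdim : d.im = -(β * t * b) := by
        simp [hdd, hb, Complex.mul_re, Complex.mul_im]; ring
      simp only [Complex.normSq_apply, Complex.sub_re, Complex.sub_im, Complex.mul_re,
        Complex.mul_im, Complex.ofReal_re, Complex.ofReal_im, hdre, hdim, hcre, hcim]
      have hb' : b ≠ 0 := hb0
      field_simp
      ring
    -- two distinct points of the set
    have hp : (1 : ℂ) ∈ {z : ℂ | ∃ w : ℂ, ‖w‖ < 1 ∧
        z = ((1 - β * ‖w‖ ^ 2 : ℝ) : ℂ) / (1 - (β : ℂ) * η * ((‖w‖ ^ 2 : ℝ) : ℂ))} :=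
      ⟨0, by norm_num, by norm_num⟩
    set q : ℂ := ((1 - β * (1/4) : ℝ) : ℂ) / (1 - (β : ℂ) * η * (((1/4 : ℝ)) : ℂ)) with hq
    have hqmem : q ∈ {z : ℂ | ∃ w : ℂ, ‖w‖ < 1 ∧
        z = ((1 - β * ‖w‖ ^ 2 : ℝ) : ℂ) / (1 - (β : ℂ) * η * ((‖w‖ ^ 2 : ℝ) : ℂ))} := by
      refine ⟨(1/2 : ℂ), by norm_num, ?_⟩
      norm_num [hq]
    have hd4 : (1 - (β : ℂ) * η * (((1/4 : ℝ)) : ℂ)) ≠ 0 := hdgen (1/4) (by norm_num) (by norm_num)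
    have hpq : (1 : ℂ) ≠ q := by
      intro h
      rw [hq, eq_div_iff hd4, one_mul] at h
      have hβc : ((β : ℝ) : ℂ) ≠ 0 := by
        simpa using ne_of_gt hβ0
      have hη1 : η = 1 := by
        have h4 : (β : ℂ) * η = (β : ℂ) * 1 := by
          push_cast at h
          linear_combination -4 * h
        exact mul_left_cancel₀ hβc h4
      exact hb0 (by simp [hb, hη1])
    -- midpoint lies in the set by convexity
    have hmmem := hconv hp hqmem (by norm_num : (0:ℝ) ≤ 1/2) (by norm_num : (0:ℝ) ≤ 1/2)
      (by norm_num : (1:ℝ)/2 + 1/2 = 1)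
    have hmid : (1/2 : ℝ) • (1 : ℂ) + (1/2 : ℝ) • q = (1 + q)/2 := by
      push_cast [Complex.real_smul]
      ring
    rw [hmid] at hmmem
    have e1 : Complex.normSq ((1 : ℂ) - c) = Complex.normSq c := circ _ hp
    have e2 : Complex.normSq (q - c) = Complex.normSq c := circ _ hqmem
    have e3 : Complex.normSq ((1 + q)/2 - c) = Complex.normSq c := circ _ hmmem
    -- parallelogram law forces 1 = q, contradiction
    have par : ∀ x y : ℂ, Complex.normSq (x + y) + Complex.normSq (x - y)
        = 2 * Complex.normSq x + 2 * Complex.normSq y := by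
      intro x y
      simp only [Complex.normSq_apply, Complex.add_re, Complex.add_im, Complex.sub_re,
        Complex.sub_im]
      ring
    have hpar := par ((1 : ℂ) - c) (q - c)
    have hsum : ((1 : ℂ) - c) + (q - c) = 2 * ((1 + q)/2 - c) := by ring
    have hdiff : ((1 : ℂ) - c) - (q - c) = 1 - q := by ring
    rw [hsum, hdiff, e1, e2, Complex.normSq_mul, e3] at hpar
    have h2 : Complex.normSq (2 : ℂ) = 4 := by
      simp [Complex.normSq_apply]; norm_num
    rw [h2] at hpar
    have : Complex.normSq ((1:ℂ) - q) = 0 := by linarith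
    exact hpq (sub_eq_zero.1 (Complex.normSq_eq_zero.1 this))
  · rintro ⟨him, h1, h2⟩
    set r : ℝ := η.re with hr
    have hη' : η = ((r : ℝ) : ℂ) := Complex.ext (by simp [hr]) (by simp [him])
    have hset : {z : ℂ | ∃ w : ℂ, ‖w‖ < 1 ∧
        z = ((1 - β * ‖w‖ ^ 2 : ℝ) : ℂ) / (1 - (β : ℂ) * η * ((‖w‖ ^ 2 : ℝ) : ℂ))}
        = Complex.ofRealAm.toLinearMap ''
          ((fun t => (1 - β * t)/(1 - β * r * t)) '' Set.Ico (0:ℝ) 1) := by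
      ext z
      simp only [Set.mem_setOf_eq, Set.mem_image, AlgHom.toLinearMap_apply,
        Complex.ofRealAm_coe]
      constructor
      · rintro ⟨w, hw, rfl⟩
        refine ⟨(1 - β * ‖w‖^2)/(1 - β * r * ‖w‖^2), ⟨‖w‖^2, ⟨by positivity,
          by simpa using pow_lt_one₀ (norm_nonneg w) hw two_ne_zero⟩, rfl⟩, ?_⟩
        rw [hη']
        push_cast
        ring
      · rintro ⟨x, ⟨t, ⟨ht0, ht1⟩, rfl⟩, rfl⟩
        refine ⟨((Real.sqrt t : ℝ) : ℂ), ?_, ?_⟩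
        · rw [Complex.norm_real, Real.norm_eq_abs, abs_of_nonneg (Real.sqrt_nonneg t)]
          calc Real.sqrt t < Real.sqrt 1 := Real.sqrt_lt_sqrt ht0 ht1
            _ = 1 := Real.sqrt_one
        · have hst : ‖((Real.sqrt t : ℝ) : ℂ)‖^2 = t := by
            rw [Complex.norm_real, Real.norm_eq_abs, abs_of_nonneg (Real.sqrt_nonneg t),
              Real.sq_sqrt ht0]
          rw [hst, hη']
          push_cast
          ring
    rw [hset]
    apply Convex.linear_image _ Complex.ofRealAm.toLinearMap
    apply convex_iff_ordConnected.2
    apply isPreconnected_iff_ordConnected.1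
    apply IsPreconnected.image isPreconnected_Ico
    apply ContinuousOn.div
    · fun_prop
    · fun_prop
    · rintro t ⟨ht0, ht1⟩
      have hbr : β * r ≤ 1 := by nlinarith [mul_nonneg hβ0.le (sub_nonneg.2 h2)]
      have h5 : β * r * t < 1 := by nlinarith [mul_nonneg (sub_nonneg.2 hbr) ht0]
      intro h
      rw [sub_eq_zero] at h
      exact absurd h.symm (ne_of_lt h5)
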